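/- (Uniform law of large numbers for the risk-set process over a fixed sparse ReLU class.) Fix τ > 0 and a sparse ReLU network class F(L,p,s,F) with fixed architecture and envelope bound ‖g‖∞ ≤ F for all g in the class (functions on [0,1]^{p0}). Let (T_i, X_i), i = 1, 2, ..., be i.i.d. with T_i ≥ 0 and X_i ∈ [0,1]^{p0}, and define S_n^(0)(t; g) = n^{−1} Σ_{i=1}^n 1{T_i ≥ t} exp(g(X_i)) and S^(0)(t; g) = E[1{T ≥ t} exp(g(X))]. Then sup_{t ∈ [0,τ]} sup_{g ∈ F(L,p,s,F)} | S_n^(0)(t; g) − S^(0)(t; g) | → 0 almost surely as n → ∞. -/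

import Mathlib

/-!
Bracketing Glivenko–Cantelli argument. For fixed architecture the parameters range over a
compact cube, and the network output is Lipschitz in the parameters uniformly on `[0,1]^{p0}`;
so finitely many networks approximate every `g` of the class uniformly. Since the law of `T` is
finite, each `t₀` has a punctured neighbourhood of small mass, and compactness of `[0,τ]` yields
finitely many pairs `A ⊆ [t, ∞) ⊆ C` with `P(T ∈ C \ A)` small. Together these give finitely
many brackets `1_A(T) e^{h(X)} - c ≤ 1{T ≥ t} e^{g(X)} ≤ 1_C(T) e^{h(X)} + c` of small mean width,
and the strong law applied to the finitely many bracket ends gives uniform convergence.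
-/

open MeasureTheory ProbabilityTheory Filter

noncomputable section

namespace CoxDNN

def cube (p0 : ℕ) : Set (Fin p0 → ℝ) := {x | ∀ i, x i ∈ Set.Icc (0 : ℝ) 1}

structure ReluNet (p0 : ℕ) where
  L : ℕ
  width : ℕ → ℕ
  W : ℕ → ℕ → ℕ → ℝ
  v : ℕ → ℕ → ℝ

def hiddenOut {p0 : ℕ} (N : ReluNet p0) (x : Fin p0 → ℝ) : ℕ → ℕ → ℝ
  | 0, j => if h : j < p0 then x ⟨j, h⟩ else 0
  | l + 1, i =>
      max ((∑ j ∈ Finset.range (N.width l), N.W l i j * hiddenOut N x l j) - N.v (l + 1) i) 0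

def netEval {p0 : ℕ} (N : ReluNet p0) (x : Fin p0 → ℝ) : ℝ :=
  ∑ j ∈ Finset.range (N.width N.L), N.W N.L 0 j * hiddenOut N x N.L j

def sparsity {p0 : ℕ} (N : ReluNet p0) : ℕ :=
  (∑ l ∈ Finset.range (N.L + 1),
    ((Finset.range (N.width (l + 1)) ×ˢ Finset.range (N.width l)).filter
      (fun ij => N.W l ij.1 ij.2 ≠ 0)).card) +
  ∑ l ∈ Finset.range N.L,
    ((Finset.range (N.width (l + 1))).filter (fun i => N.v (l + 1) i ≠ 0)).card

def ParamsBounded {p0 : ℕ} (N : ReluNet p0) : Prop :=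
  (∀ l i j, |N.W l i j| ≤ 1) ∧ ∀ l i, |N.v l i| ≤ 1

def sparseReluClass (p0 : ℕ) (L : ℕ) (p : ℕ → ℕ) (s : ℕ) (F : ℝ) :
    Set ((Fin p0 → ℝ) → ℝ) :=
  {g | ∃ N : ReluNet p0, N.L = L ∧ N.width = p ∧ p 0 = p0 ∧ p (L + 1) = 1 ∧
    ParamsBounded N ∧ sparsity N ≤ s ∧
    (∀ x, g x = netEval N x - netEval N 0) ∧
    ∀ x ∈ cube p0, |g x| ≤ F}

end CoxDNN

open Topology Set Real
open scoped ENNReal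

section Bracketing

variable {Ω α ι : Type*}

def empiricalMean (Y : ℕ → Ω → α) (f : α → ℝ) (n : ℕ) (ω : Ω) : ℝ :=
  (n : ℝ)⁻¹ * ∑ i ∈ Finset.range n, f (Y i ω)

lemma empiricalMean_mono {Y : ℕ → Ω → α} {S : Set α} (hS : ∀ i ω, Y i ω ∈ S) {f g : α → ℝ}
    (hfg : ∀ z ∈ S, f z ≤ g z) (n : ℕ) (ω : Ω) :
    empiricalMean Y f n ω ≤ empiricalMean Y g n ω :=
  mul_le_mul_of_nonneg_left (Finset.sum_le_sum fun i _ => hfg _ (hS i ω)) (by positivity)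

variable [MeasurableSpace Ω] [MeasurableSpace α] {μ : Measure Ω}

def IsBracket (μ : Measure Ω) (Z : Ω → α) (S : Set α) (ε : ℝ) (b : (α → ℝ) × (α → ℝ))
    (f : α → ℝ) : Prop :=
  (∀ z ∈ S, b.1 z ≤ f z ∧ f z ≤ b.2 z) ∧ ∫ ω, (b.2 (Z ω) - b.1 (Z ω)) ∂μ ≤ ε

def HasFiniteBracketing (μ : Measure Ω) (Z : Ω → α) (S : Set α) (f : ι → α → ℝ) (ε : ℝ) :
    Prop :=
  ∃ B : Set ((α → ℝ) × (α → ℝ)), B.Finite ∧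
    (∀ b ∈ B, Measurable b.1 ∧ Measurable b.2 ∧
      Integrable (fun ω => b.1 (Z ω)) μ ∧ Integrable (fun ω => b.2 (Z ω)) μ) ∧
    ∀ k, ∃ b ∈ B, IsBracket μ Z S ε b (f k)

lemma integrable_comp_of_bracketed {Z : Ω → α} (hZ : Measurable Z) {S : Set α}
    (hZS : ∀ ω, Z ω ∈ S) {l u f : α → ℝ} (hf : Measurable f)
    (hl : Integrable (fun ω => l (Z ω)) μ) (hu : Integrable (fun ω => u (Z ω)) μ)
    (hlfu : ∀ z ∈ S, l z ≤ f z ∧ f z ≤ u z) : Integrable (fun ω => f (Z ω)) μ := by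
  refine (hl.abs.add hu.abs).mono' (hf.comp hZ).aestronglyMeasurable (ae_of_all _ fun ω => ?_)
  obtain ⟨hlf, hfu⟩ := hlfu _ (hZS ω)
  rw [Real.norm_eq_abs, Pi.add_apply, abs_le]
  constructor <;> linarith [neg_abs_le (l (Z ω)), le_abs_self (u (Z ω)), abs_nonneg (l (Z ω)),
    abs_nonneg (u (Z ω))]

variable {Y : ℕ → Ω → α}

lemma ae_tendsto_empiricalMean (hmeas : ∀ i, Measurable (Y i)) (hindep : iIndepFun Y μ)
    (hident : ∀ i, μ.map (Y i) = μ.map (Y 0)) {f : α → ℝ} (hf : Measurable f)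
    (hint : Integrable (fun ω => f (Y 0 ω)) μ) :
    ∀ᵐ ω ∂μ, Tendsto (empiricalMean Y f · ω) atTop (𝓝 (∫ ω, f (Y 0 ω) ∂μ)) := by
  have hid i : IdentDistrib (fun ω => f (Y i ω)) (fun ω => f (Y 0 ω)) μ μ :=
    IdentDistrib.comp ⟨(hmeas i).aemeasurable, (hmeas 0).aemeasurable, hident i⟩ hf
  filter_upwards [strong_law_ae_real (fun i ω => f (Y i ω)) hint
    (fun i j hij => (hindep.indepFun hij).comp hf hf) hid] with ω hω
  simpa only [empiricalMean, div_eq_inv_mul] using hω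

lemma ae_eventually_abs_empiricalMean_sub_le (hmeas : ∀ i, Measurable (Y i))
    (hindep : iIndepFun Y μ) (hident : ∀ i, μ.map (Y i) = μ.map (Y 0)) {S : Set α}
    (hS : ∀ i ω, Y i ω ∈ S) {f : ι → α → ℝ} (hf : ∀ k, Measurable (f k))
    {ε : ℝ} (hε : 0 < ε) (hB : HasFiniteBracketing μ (Y 0) S f ε) :
    ∀ᵐ ω ∂μ, ∀ᶠ n in atTop, ∀ k,
      |empiricalMean Y (f k) n ω - ∫ ω', f k (Y 0 ω') ∂μ| ≤ 2 * ε := by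
  obtain ⟨B, hBfin, hBreg, hbracket⟩ := hB
  have hlim : ∀ᵐ ω ∂μ, ∀ b ∈ B,
      Tendsto (empiricalMean Y b.1 · ω) atTop (𝓝 (∫ ω, b.1 (Y 0 ω) ∂μ)) ∧
      Tendsto (empiricalMean Y b.2 · ω) atTop (𝓝 (∫ ω, b.2 (Y 0 ω) ∂μ)) := by
    refine (ae_ball_iff hBfin.countable).2 fun b hb => ?_
    obtain ⟨hl, hu, hli, hui⟩ := hBreg b hb
    exact (ae_tendsto_empiricalMean hmeas hindep hident hl hli).and
      (ae_tendsto_empiricalMean hmeas hindep hident hu hui)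
  filter_upwards [hlim] with ω hω
  have hnear : ∀ᶠ n in atTop, ∀ b ∈ B,
      dist (empiricalMean Y b.1 n ω) (∫ ω, b.1 (Y 0 ω) ∂μ) < ε ∧
      dist (empiricalMean Y b.2 n ω) (∫ ω, b.2 (Y 0 ω) ∂μ) < ε :=
    (eventually_all_finite hBfin).2 fun b hb =>
      (Metric.tendsto_nhds.1 (hω b hb).1 ε hε).and (Metric.tendsto_nhds.1 (hω b hb).2 ε hε)
  filter_upwards [hnear] with n hn k
  obtain ⟨b, hb, hbf, hwidth⟩ := hbracket k
  obtain ⟨hli, hui⟩ := (hBreg b hb).2.2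
  have hemp_l := empiricalMean_mono hS (fun z hz => (hbf z hz).1) n ω
  have hemp_u := empiricalMean_mono hS (fun z hz => (hbf z hz).2) n ω
  have hfi := integrable_comp_of_bracketed (hmeas 0) (hS 0) (hf k) hli hui hbf
  have hint_l := integral_mono hli hfi fun ω => (hbf _ (hS 0 ω)).1
  have hint_u := integral_mono hfi hui fun ω => (hbf _ (hS 0 ω)).2
  rw [integral_sub hui hli] at hwidth
  obtain ⟨hl, hu⟩ := hn b hb
  rw [Real.dist_eq, abs_lt] at hl hu
  rw [abs_le]
  constructor <;> linarith

theorem ae_forall_eventually_abs_empiricalMean_sub_le (hmeas : ∀ i, Measurable (Y i))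
    (hindep : iIndepFun Y μ) (hident : ∀ i, μ.map (Y i) = μ.map (Y 0)) {S : Set α}
    (hS : ∀ i ω, Y i ω ∈ S) {f : ι → α → ℝ} (hf : ∀ k, Measurable (f k))
    (hB : ∀ ε > 0, HasFiniteBracketing μ (Y 0) S f ε) :
    ∀ᵐ ω ∂μ, ∀ ε > 0, ∀ᶠ n in atTop, ∀ k,
      |empiricalMean Y (f k) n ω - ∫ ω', f k (Y 0 ω') ∂μ| ≤ ε := by
  have h : ∀ᵐ ω ∂μ, ∀ m : ℕ, ∀ᶠ n in atTop, ∀ k,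
      |empiricalMean Y (f k) n ω - ∫ ω', f k (Y 0 ω') ∂μ| ≤ 2 * (1 / (m + 1)) :=
    ae_all_iff.2 fun m =>
      ae_eventually_abs_empiricalMean_sub_le hmeas hindep hident hS hf (by positivity)
        (hB _ (by positivity))
  filter_upwards [h] with ω hω ε hε
  obtain ⟨m, hm⟩ := exists_nat_one_div_lt (half_pos hε)
  exact (hω m).mono fun n hn k => (hn k).trans (by linarith)

end Bracketing

lemma exists_pos_measure_Ioo_union_Ioo_lt (ν : Measure ℝ) [IsFiniteMeasure ν] (t : ℝ)
    {ε : ℝ≥0∞} (hε : 0 < ε) : ∃ δ > 0, ν (Ioo (t - δ) t ∪ Ioo t (t + δ)) < ε := by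
  have hempty : ⋂ δ > (0 : ℝ), Ioo (t - δ) t ∪ Ioo t (t + δ) = ∅ := by
    refine eq_empty_iff_forall_notMem.2 fun r hr => ?_
    have hr := mem_iInter₂.1 hr
    rcases eq_or_ne r t with rfl | hne
    · simpa using hr 1 one_pos
    · rcases hr |r - t| (abs_pos.2 (sub_ne_zero.2 hne)) with h | h <;>
        cases abs_cases (r - t) <;> linarith [h.1, h.2]
  have hlim := tendsto_measure_biInter_gt (μ := ν) (a := 0)
    (s := fun δ => Ioo (t - δ) t ∪ Ioo t (t + δ))
    (fun _ _ => (measurableSet_Ioo.union measurableSet_Ioo).nullMeasurableSet)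
    (fun δ δ' _ hδ => union_subset_union (Ioo_subset_Ioo (by linarith) le_rfl)
      (Ioo_subset_Ioo le_rfl (by linarith)))
    ⟨1, one_pos, measure_ne_top _ _⟩
  rw [hempty, measure_empty] at hlim
  obtain ⟨δ, hδν, hδ⟩ := ((hlim.eventually (gt_mem_nhds hε)).and self_mem_nhdsWithin).exists
  exact ⟨δ, hδ, hδν⟩

lemma exists_finite_brackets_Ici (ν : Measure ℝ) [IsFiniteMeasure ν] {K : Set ℝ}
    (hK : IsCompact K) {ε : ℝ≥0∞} (hε : 0 < ε) :
    ∃ P : Set (Set ℝ × Set ℝ), P.Finite ∧ (∀ q ∈ P, MeasurableSet q.1 ∧ MeasurableSet q.2) ∧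
      ∀ t ∈ K, ∃ q ∈ P, q.1 ⊆ Ici t ∧ Ici t ⊆ q.2 ∧ ν (q.2 \ q.1) < ε := by
  choose δ hδ hν using fun t => exists_pos_measure_Ioo_union_Ioo_lt ν t hε
  obtain ⟨b, -, hbfin, hcover⟩ := hK.elim_finite_subcover_image
    (c := fun t => Ioo (t - δ t) (t + δ t)) (fun _ _ => isOpen_Ioo)
    fun t ht => mem_biUnion ht ⟨by linarith [hδ t], by linarith [hδ t]⟩
  refine ⟨⋃ t₀ ∈ b, {(Ici t₀, Ioi (t₀ - δ t₀)), (Ici (t₀ + δ t₀), Ioi t₀)},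
    hbfin.biUnion fun _ _ => toFinite _, ?_, fun t ht => ?_⟩
  · simp only [mem_iUnion, mem_insert_iff, mem_singleton_iff]
    rintro q ⟨t₀, -, rfl | rfl⟩ <;> exact ⟨measurableSet_Ici, measurableSet_Ioi⟩
  obtain ⟨t₀, ht₀b, ht₀⟩ := mem_iUnion₂.1 (hcover ht)
  rcases le_or_gt t t₀ with hle | hlt
  · refine ⟨(Ici t₀, Ioi (t₀ - δ t₀)), mem_biUnion ht₀b (by simp), Ici_subset_Ici.2 hle,
      Ici_subset_Ioi.2 ht₀.1, ?_⟩
    rw [Ioi_sdiff_Ici]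
    exact (measure_mono subset_union_left).trans_lt (hν t₀)
  · refine ⟨(Ici (t₀ + δ t₀), Ioi t₀), mem_biUnion ht₀b (by simp), Ici_subset_Ici.2 ht₀.2.le,
      Ici_subset_Ioi.2 hlt, ?_⟩
    rw [Ioi_sdiff_Ici]
    exact (measure_mono subset_union_right).trans_lt (hν t₀)

lemma abs_exp_sub_exp_le {a b c : ℝ} (ha : a ≤ c) (hb : b ≤ c) :
    |exp a - exp b| ≤ exp c * |a - b| := by
  wlog hba : b ≤ a generalizing a b
  · rw [abs_sub_comm, abs_sub_comm a]
    exact this hb ha (le_of_not_ge hba)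
  have hexp : exp b = exp a * exp (b - a) := by rw [← exp_add]; ring_nf
  have hgap : exp a - exp b ≤ exp a * (a - b) := by
    nlinarith [add_one_le_exp (b - a), exp_pos a]
  rw [abs_of_nonneg (sub_nonneg.2 (exp_le_exp.2 hba)), abs_of_nonneg (sub_nonneg.2 hba)]
  exact hgap.trans (mul_le_mul_of_nonneg_right (exp_le_exp.2 ha) (sub_nonneg.2 hba))

section RiskBracket

variable {Ω β : Type*} [MeasurableSpace Ω] [MeasurableSpace β] {μ : Measure Ω}

def riskBracket (A C : Set ℝ) (ψ : β → ℝ) (c : ℝ) : (ℝ × β → ℝ) × (ℝ × β → ℝ) :=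
  (fun z => (Prod.fst ⁻¹' A).indicator (fun z => ψ z.2) z - c,
    fun z => (Prod.fst ⁻¹' C).indicator (fun z => ψ z.2) z + c)

variable {Z : Ω → ℝ × β} {S : Set β} {ψ : β → ℝ} {M : ℝ}

lemma integrable_indicator_fst_preimage [IsFiniteMeasure μ] (hZ : Measurable Z)
    (hZS : ∀ ω, (Z ω).2 ∈ S) {A : Set ℝ} (hA : MeasurableSet A) (hψ : Measurable ψ)
    (hψ0 : ∀ x, 0 ≤ ψ x) (hψM : ∀ x ∈ S, ψ x ≤ M) :
    Integrable (fun ω => (Prod.fst ⁻¹' A).indicator (fun z => ψ z.2) (Z ω)) μ := by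
  refine Integrable.of_bound (((hψ.comp measurable_snd).indicator (measurable_fst hA)).comp
    hZ).aestronglyMeasurable M (ae_of_all _ fun ω => ?_)
  have hM := (hψ0 _).trans (hψM _ (hZS ω))
  by_cases h : (Z ω).1 ∈ A <;>
    simp [indicator, h, abs_of_nonneg (hψ0 _), hψM _ (hZS ω), hM]

lemma measurable_integrable_riskBracket [IsFiniteMeasure μ] (hZ : Measurable Z) (hZS : ∀ ω, (Z ω).2 ∈ S)
    {A C : Set ℝ} (hA : MeasurableSet A) (hC : MeasurableSet C) (hψ : Measurable ψ)
    (hψ0 : ∀ x, 0 ≤ ψ x) (hψM : ∀ x ∈ S, ψ x ≤ M) (c : ℝ) :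
    Measurable (riskBracket A C ψ c).1 ∧ Measurable (riskBracket A C ψ c).2 ∧
      Integrable (fun ω => (riskBracket A C ψ c).1 (Z ω)) μ ∧
      Integrable (fun ω => (riskBracket A C ψ c).2 (Z ω)) μ :=
  ⟨((hψ.comp measurable_snd).indicator (measurable_fst hA)).sub_const c,
    ((hψ.comp measurable_snd).indicator (measurable_fst hC)).add_const c,
    (integrable_indicator_fst_preimage hZ hZS hA hψ hψ0 hψM).sub (integrable_const c),
    (integrable_indicator_fst_preimage hZ hZS hC hψ hψ0 hψM).add (integrable_const c)⟩

lemma isBracket_riskBracket [IsProbabilityMeasure μ] (hZ : Measurable Z)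
    (hZS : ∀ ω, (Z ω).2 ∈ S) {A C : Set ℝ} (hA : MeasurableSet A) (hC : MeasurableSet C)
    {t : ℝ} (hAt : A ⊆ Ici t) (htC : Ici t ⊆ C) {φ : β → ℝ} (hψ : Measurable ψ)
    (hψ0 : ∀ x, 0 ≤ ψ x) (hψM : ∀ x ∈ S, ψ x ≤ M) {c : ℝ} (hφψ : ∀ x ∈ S, |φ x - ψ x| ≤ c) :
    IsBracket μ Z {z | z.2 ∈ S} (M * (μ.map fun ω => (Z ω).1).real (C \ A) + 2 * c)
      (riskBracket A C ψ c) (fun z => if t ≤ z.1 then φ z.2 else 0) := by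
  have hAC : A ⊆ C := hAt.trans htC
  refine ⟨fun z hz => ?_, ?_⟩
  · have hψz := hψ0 z.2
    have hφψz := abs_le.1 (hφψ _ hz)
    by_cases ht : t ≤ z.1
    · by_cases hA' : z.1 ∈ A <;> simp [riskBracket, indicator, ht, htC ht, hA'] <;>
        exact ⟨by linarith, by linarith⟩
    · have hA' : z.1 ∉ A := fun h => ht (hAt h)
      by_cases hC' : z.1 ∈ C <;> simp [riskBracket, indicator, ht, hA', hC'] <;>
        first | exact ⟨by linarith, by linarith⟩ | linarith
  set T : Ω → ℝ := fun ω => (Z ω).1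
  have hT : Measurable T := measurable_fst.comp hZ
  have hD : MeasurableSet (T ⁻¹' (C \ A)) := hT (hC.diff hA)
  have hpt : ∀ ω, (riskBracket A C ψ c).2 (Z ω) - (riskBracket A C ψ c).1 (Z ω) ≤
      M * (T ⁻¹' (C \ A)).indicator 1 ω + 2 * c := fun ω => by
    have hψM' := hψM _ (hZS ω)
    have hψ0' := hψ0 (Z ω).2
    by_cases hA' : T ω ∈ A
    · simp [riskBracket, indicator, T, hA', hAC hA']; linarith
    · by_cases hC' : T ω ∈ C <;> simp [riskBracket, indicator, T, hA', hC'] <;> linarith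
  have hint := measurable_integrable_riskBracket (μ := μ) hZ hZS hA hC hψ hψ0 hψM c
  have hind : Integrable (fun ω => M * (T ⁻¹' (C \ A)).indicator 1 ω) μ :=
    ((integrable_const 1).indicator hD).const_mul M
  calc ∫ ω, ((riskBracket A C ψ c).2 (Z ω) - (riskBracket A C ψ c).1 (Z ω)) ∂μ
      ≤ ∫ ω, (M * (T ⁻¹' (C \ A)).indicator 1 ω + 2 * c) ∂μ :=
        integral_mono (hint.2.2.2.sub hint.2.2.1) (hind.add (integrable_const _)) hpt
    _ = M * (μ.map T).real (C \ A) + 2 * c := by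
        rw [integral_add hind (integrable_const _), integral_const_mul, integral_indicator_one hD,
          map_measureReal_apply hT (hC.diff hA)]
        simp

end RiskBracket

namespace CoxDNN

variable {p0 : ℕ}

lemma abs_le_one_of_mem_cube {x : Fin p0 → ℝ} (hx : x ∈ cube p0) (i : Fin p0) : |x i| ≤ 1 :=
  abs_le.2 ⟨by linarith [(hx i).1], (hx i).2⟩

lemma zero_mem_cube : (0 : Fin p0 → ℝ) ∈ cube p0 := fun _ => ⟨le_rfl, zero_le_one⟩

lemma measurable_hiddenOut (N : ReluNet p0) : ∀ l j, Measurable fun x => hiddenOut N x l j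
  | 0, j => by
      simp only [hiddenOut]
      split
      · exact measurable_pi_apply _
      · exact measurable_const
  | l + 1, _ =>
      ((Finset.measurable_sum _ fun j _ => (measurable_hiddenOut N l j).const_mul _).sub_const
        _).max measurable_const

lemma measurable_netEval (N : ReluNet p0) : Measurable (netEval N) :=
  Finset.measurable_sum _ fun j _ => (measurable_hiddenOut N N.L j).const_mul _

def centeredEval (N : ReluNet p0) (x : Fin p0 → ℝ) : ℝ := netEval N x - netEval N 0

lemma measurable_of_mem_sparseReluClass {L : ℕ} {p : ℕ → ℕ} {s : ℕ} {F : ℝ}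
    {g : (Fin p0 → ℝ) → ℝ} (hg : g ∈ sparseReluClass p0 L p s F) : Measurable g := by
  obtain ⟨N, -, -, -, -, -, -, hgN, -⟩ := hg
  rw [show g = fun x => netEval N x - netEval N 0 from funext hgN]
  exact (measurable_netEval N).sub_const _

lemma abs_relu_le (a : ℝ) : |max a 0| ≤ |a| := by
  rw [abs_of_nonneg (le_max_right _ _)]
  exact max_le (le_abs_self a) (abs_nonneg a)

lemma abs_sum_mul_le {n : ℕ} {w a : ℕ → ℝ} {M : ℝ} (hw : ∀ j, |w j| ≤ 1)
    (ha : ∀ j < n, |a j| ≤ M) : |∑ j ∈ Finset.range n, w j * a j| ≤ n * M := by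
  calc |∑ j ∈ Finset.range n, w j * a j| ≤ ∑ j ∈ Finset.range n, |w j * a j| :=
        Finset.abs_sum_le_sum_abs _ _
    _ ≤ ∑ _j ∈ Finset.range n, M := Finset.sum_le_sum fun j hj => by
        rw [abs_mul]
        exact (mul_le_mul (hw j) (ha j (Finset.mem_range.1 hj)) (abs_nonneg _)
          zero_le_one).trans_eq (one_mul M)
    _ = n * M := by simp

lemma abs_sum_mul_sub_sum_mul_le {n : ℕ} {w w' a a' : ℕ → ℝ} {δ M D : ℝ} (hδ : 0 ≤ δ)
    (hw' : ∀ j, |w' j| ≤ 1) (hww' : ∀ j < n, |w j - w' j| ≤ δ) (ha : ∀ j < n, |a j| ≤ M)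
    (haa' : ∀ j < n, |a j - a' j| ≤ D) :
    |∑ j ∈ Finset.range n, w j * a j - ∑ j ∈ Finset.range n, w' j * a' j| ≤ n * (δ * M + D) := by
  rw [← Finset.sum_sub_distrib]
  calc |∑ j ∈ Finset.range n, (w j * a j - w' j * a' j)|
      ≤ ∑ j ∈ Finset.range n, |w j * a j - w' j * a' j| := Finset.abs_sum_le_sum_abs _ _
    _ ≤ ∑ _j ∈ Finset.range n, (δ * M + D) := Finset.sum_le_sum fun j hj => by
        have hj := Finset.mem_range.1 hj
        calc |w j * a j - w' j * a' j| = |(w j - w' j) * a j + w' j * (a j - a' j)| := by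
              ring_nf
          _ ≤ |w j - w' j| * |a j| + |w' j| * |a j - a' j| := by
              rw [← abs_mul, ← abs_mul]; exact abs_add_le _ _
          _ ≤ δ * M + 1 * D := add_le_add
              (mul_le_mul (hww' j hj) (ha j hj) (abs_nonneg _) hδ)
              (mul_le_mul (hw' j) (haa' j hj) (abs_nonneg _) zero_le_one)
          _ = δ * M + D := by rw [one_mul]
    _ = n * (δ * M + D) := by rw [Finset.sum_const, Finset.card_range, nsmul_eq_mul]

def hiddenBound (p : ℕ → ℕ) : ℕ → ℝ
  | 0 => 1
  | l + 1 => p l * hiddenBound p l + 1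

def hiddenLipschitz (p : ℕ → ℕ) : ℕ → ℝ
  | 0 => 0
  | l + 1 => p l * (hiddenBound p l + hiddenLipschitz p l) + 1

def netLipschitz (p : ℕ → ℕ) (L : ℕ) : ℝ := p L * (hiddenBound p L + hiddenLipschitz p L)

lemma hiddenBound_nonneg (p : ℕ → ℕ) : ∀ l, 0 ≤ hiddenBound p l
  | 0 => zero_le_one
  | l + 1 => by have := hiddenBound_nonneg p l; simp only [hiddenBound]; positivity

lemma hiddenLipschitz_nonneg (p : ℕ → ℕ) : ∀ l, 0 ≤ hiddenLipschitz p l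
  | 0 => le_rfl
  | l + 1 => by
      have := hiddenBound_nonneg p l
      have := hiddenLipschitz_nonneg p l
      simp only [hiddenLipschitz]; positivity

lemma netLipschitz_nonneg (p : ℕ → ℕ) (L : ℕ) : 0 ≤ netLipschitz p L := by
  have := hiddenBound_nonneg p L
  have := hiddenLipschitz_nonneg p L
  unfold netLipschitz; positivity

section Lipschitz

variable {N N' : ReluNet p0} {p : ℕ → ℕ} {x : Fin p0 → ℝ}

lemma abs_hiddenOut_le (hb : ParamsBounded N) (hw : N.width = p) (hx : x ∈ cube p0) :
    ∀ l j, |hiddenOut N x l j| ≤ hiddenBound p l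
  | 0, j => by
      simp only [hiddenOut, hiddenBound]
      split
      · exact abs_le_one_of_mem_cube hx _
      · simp
  | l + 1, i => by
      have hsum := abs_sum_mul_le (n := N.width l) (hb.1 l i)
        fun j _ => abs_hiddenOut_le hb hw hx l j
      rw [hw] at hsum
      simp only [hiddenOut, hiddenBound, hw]
      exact (abs_relu_le _).trans ((abs_sub _ _).trans (add_le_add hsum (hb.2 _ _)))

/-- The weights and biases that `netEval` reads for depth `L` and widths `p`. -/
abbrev Params (L : ℕ) (p : ℕ → ℕ) : Type :=
  ((l : Fin (L + 1)) → Fin (p ((l : ℕ) + 1)) → Fin (p l) → ℝ) ×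
    ((l : Fin L) → Fin (p ((l : ℕ) + 1)) → ℝ)

def ReluNet.params (N : ReluNet p0) (L : ℕ) (p : ℕ → ℕ) : Params L p :=
  (fun l i j => N.W l i j, fun l i => N.v ((l : ℕ) + 1) i)

variable {L : ℕ}

lemma abs_W_sub_le_dist {l i j : ℕ} (hl : l ≤ L) (hi : i < p (l + 1)) (hj : j < p l) :
    |N.W l i j - N'.W l i j| ≤ dist (N.params L p) (N'.params L p) := by
  let l' : Fin (L + 1) := ⟨l, Nat.lt_succ_of_le hl⟩
  calc |N.W l i j - N'.W l i j|
      = dist ((N.params L p).1 l' ⟨i, hi⟩ ⟨j, hj⟩) ((N'.params L p).1 l' ⟨i, hi⟩ ⟨j, hj⟩) :=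
        (Real.dist_eq _ _).symm
    _ ≤ dist ((N.params L p).1 l' ⟨i, hi⟩) ((N'.params L p).1 l' ⟨i, hi⟩) := dist_le_pi_dist _ _ _
    _ ≤ dist ((N.params L p).1 l') ((N'.params L p).1 l') := dist_le_pi_dist _ _ _
    _ ≤ dist (N.params L p).1 (N'.params L p).1 := dist_le_pi_dist _ _ _
    _ ≤ dist (N.params L p) (N'.params L p) := by rw [Prod.dist_eq]; exact le_max_left _ _

lemma abs_v_sub_le_dist {l i : ℕ} (hl : l < L) (hi : i < p (l + 1)) :
    |N.v (l + 1) i - N'.v (l + 1) i| ≤ dist (N.params L p) (N'.params L p) := by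
  let l' : Fin L := ⟨l, hl⟩
  calc |N.v (l + 1) i - N'.v (l + 1) i|
      = dist ((N.params L p).2 l' ⟨i, hi⟩) ((N'.params L p).2 l' ⟨i, hi⟩) :=
        (Real.dist_eq _ _).symm
    _ ≤ dist ((N.params L p).2 l') ((N'.params L p).2 l') := dist_le_pi_dist _ _ _
    _ ≤ dist (N.params L p).2 (N'.params L p).2 := dist_le_pi_dist _ _ _
    _ ≤ dist (N.params L p) (N'.params L p) := by rw [Prod.dist_eq]; exact le_max_right _ _

lemma norm_params_le_one (hb : ParamsBounded N) : ‖N.params L p‖ ≤ 1 := by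
  refine norm_prod_le_iff.2 ⟨?_, ?_⟩
  · refine pi_norm_le_iff_of_nonneg zero_le_one |>.2 fun l => ?_
    refine pi_norm_le_iff_of_nonneg zero_le_one |>.2 fun i => ?_
    refine pi_norm_le_iff_of_nonneg zero_le_one |>.2 fun j => ?_
    exact (Real.norm_eq_abs _).trans_le (hb.1 _ _ _)
  · refine pi_norm_le_iff_of_nonneg zero_le_one |>.2 fun l => ?_
    refine pi_norm_le_iff_of_nonneg zero_le_one |>.2 fun i => ?_
    exact (Real.norm_eq_abs _).trans_le (hb.2 _ _)

lemma abs_hiddenOut_sub_le (hb : ParamsBounded N) (hb' : ParamsBounded N') (hw : N.width = p)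
    (hw' : N'.width = p) (hx : x ∈ cube p0) : ∀ l ≤ L, ∀ j < p l,
    |hiddenOut N x l j - hiddenOut N' x l j| ≤
      dist (N.params L p) (N'.params L p) * hiddenLipschitz p l
  | 0, _, j, _ => by simp [hiddenOut, hiddenLipschitz]
  | l + 1, hl, i, hi => by
      have hsum := abs_sum_mul_sub_sum_mul_le (n := p l)
        (δ := dist (N.params L p) (N'.params L p)) dist_nonneg (hb'.1 l i)
        (fun j hj => abs_W_sub_le_dist (by omega) hi hj)
        (fun j _ => abs_hiddenOut_le hb hw hx l j)
        (fun j hj => abs_hiddenOut_sub_le hb hb' hw hw' hx l (by omega) j hj)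
      have hv := abs_v_sub_le_dist (N := N) (N' := N') (by omega : l < L) hi
      simp only [hiddenOut, hiddenLipschitz, hw, hw']
      refine (abs_max_sub_max_le_abs _ _ _).trans ?_
      rw [sub_sub_sub_comm]
      refine (abs_sub _ _).trans ?_
      linarith

lemma abs_netEval_sub_le (hb : ParamsBounded N) (hb' : ParamsBounded N') (hL : N.L = L)
    (hL' : N'.L = L) (hw : N.width = p) (hw' : N'.width = p) (hp : 0 < p (L + 1))
    (hx : x ∈ cube p0) :
    |netEval N x - netEval N' x| ≤ dist (N.params L p) (N'.params L p) * netLipschitz p L := by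
  have hsum := abs_sum_mul_sub_sum_mul_le (n := p L)
    (δ := dist (N.params L p) (N'.params L p)) dist_nonneg (hb'.1 L 0)
    (fun j hj => abs_W_sub_le_dist le_rfl hp hj) (fun j _ => abs_hiddenOut_le hb hw hx L j)
    (fun j hj => abs_hiddenOut_sub_le hb hb' hw hw' hx L le_rfl j hj)
  unfold netEval netLipschitz
  rw [hL, hL', hw, hw']
  linarith

lemma abs_centeredEval_sub_le (hb : ParamsBounded N) (hb' : ParamsBounded N') (hL : N.L = L)
    (hL' : N'.L = L) (hw : N.width = p) (hw' : N'.width = p) (hp : 0 < p (L + 1))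
    (hx : x ∈ cube p0) :
    |centeredEval N x - centeredEval N' x| ≤
      2 * (dist (N.params L p) (N'.params L p) * netLipschitz p L) := by
  have h := abs_netEval_sub_le hb hb' hL hL' hw hw' hp hx
  have h0 := abs_netEval_sub_le hb hb' hL hL' hw hw' hp zero_mem_cube
  unfold centeredEval
  rw [sub_sub_sub_comm]
  linarith [abs_sub (netEval N x - netEval N' x) (netEval N 0 - netEval N' 0)]

end Lipschitz

theorem exists_finite_approx_sparseReluClass (L : ℕ) (p : ℕ → ℕ) (s : ℕ) (F : ℝ) {η : ℝ}
    (hη : 0 < η) :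
    ∃ G ⊆ sparseReluClass p0 L p s F, G.Finite ∧ ∀ g ∈ sparseReluClass p0 L p s F,
      ∃ h ∈ G, ∀ x ∈ cube p0, |g x - h x| ≤ η := by
  set K := netLipschitz p L
  set S : Set (ReluNet p0) := {N | N.L = L ∧ N.width = p ∧ ParamsBounded N ∧
    centeredEval N ∈ sparseReluClass p0 L p s F}
  have hS : TotallyBounded ((fun N => N.params L p) '' S) :=
    (isCompact_closedBall (0 : Params L p) 1).totallyBounded.subset <| by
      rintro _ ⟨N, hN, rfl⟩
      exact mem_closedBall_zero_iff.2 (norm_params_le_one hN.2.2.1)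
  have hδ : 0 < η / (2 * K + 1) := by have := netLipschitz_nonneg p L; positivity
  -- The net is drawn from `S` itself, so every approximant lies in the class.
  obtain ⟨T, hTS, hTfin, hcover⟩ := Set.exists_subset_image_finite_and.1
    (Metric.finite_approx_of_totallyBounded hS _ hδ)
  refine ⟨centeredEval '' T, ?_, hTfin.image _, ?_⟩
  · rintro _ ⟨N, hN, rfl⟩
    exact (hTS hN).2.2.2
  intro g hg
  have ⟨N, hNL, hNw, _, hpL, hNb, _, hgN, _⟩ := hg
  have hNg : centeredEval N = g := funext fun x => (hgN x).symm
  have hNS : N ∈ S := ⟨hNL, hNw, hNb, hNg ▸ hg⟩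
  obtain ⟨_, ⟨N', hN'T, rfl⟩, hNN'⟩ := Set.mem_iUnion₂.1 (hcover (Set.mem_image_of_mem _ hNS))
  obtain ⟨hN'L, hN'w, hN'b, -⟩ := hTS hN'T
  refine ⟨centeredEval N', Set.mem_image_of_mem _ hN'T, fun x hx => ?_⟩
  have hclose := abs_centeredEval_sub_le hNb hN'b hNL hN'L hNw hN'w (by omega) hx
  have hdist : dist (N.params L p) (N'.params L p) * (2 * K + 1) ≤ η :=
    (le_div_iff₀ (by have := netLipschitz_nonneg p L; positivity)).1 (Metric.mem_ball.1 hNN').le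
  rw [← hNg]
  nlinarith [dist_nonneg (x := N.params L p) (y := N'.params L p)]

lemma abs_le_of_mem_sparseReluClass {L : ℕ} {p : ℕ → ℕ} {s : ℕ} {F : ℝ}
    {g : (Fin p0 → ℝ) → ℝ} (hg : g ∈ sparseReluClass p0 L p s F) {x : Fin p0 → ℝ}
    (hx : x ∈ cube p0) : |g x| ≤ F := by
  obtain ⟨N, -, -, -, -, -, -, -, hgF⟩ := hg
  exact hgF x hx

theorem hasFiniteBracketing_riskSet {Ω : Type*} [MeasurableSpace Ω] {μ : Measure Ω}
    [IsProbabilityMeasure μ] {Z : Ω → ℝ × (Fin p0 → ℝ)} (hZ : Measurable Z)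
    (hZX : ∀ ω, (Z ω).2 ∈ cube p0) {K : Set ℝ} (hK : IsCompact K) (L : ℕ) (p : ℕ → ℕ) (s : ℕ)
    (F : ℝ) {ε : ℝ} (hε : 0 < ε) :
    HasFiniteBracketing μ Z {z | z.2 ∈ cube p0}
      (fun (k : K × sparseReluClass p0 L p s F) z => if (k.1 : ℝ) ≤ z.1 then exp (k.2.1 z.2) else 0)
      ε := by
  have hM : 0 < exp F := exp_pos F
  have hexpF {g} (hg : g ∈ sparseReluClass p0 L p s F) (x) (hx : x ∈ cube p0) : exp (g x) ≤ exp F :=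
    exp_le_exp.2 (abs_le.1 (abs_le_of_mem_sparseReluClass hg hx)).2
  obtain ⟨P, hPfin, hPm, hP⟩ := exists_finite_brackets_Ici (μ.map fun ω => (Z ω).1) hK
    (ε := ENNReal.ofReal (ε / (2 * exp F))) (ENNReal.ofReal_pos.2 (by positivity))
  obtain ⟨G, hGsub, hGfin, hG⟩ :=
    exists_finite_approx_sparseReluClass (p0 := p0) L p s F (η := ε / (4 * exp F)) (by positivity)
  refine ⟨(fun q : (Set ℝ × Set ℝ) × ((Fin p0 → ℝ) → ℝ) =>
    riskBracket q.1.1 q.1.2 (fun x => exp (q.2 x)) (ε / 4)) '' P ×ˢ G,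
    (hPfin.prod hGfin).image _, ?_, ?_⟩
  · rintro _ ⟨⟨⟨A, C⟩, h⟩, ⟨hq, hh⟩, rfl⟩
    exact measurable_integrable_riskBracket hZ hZX (hPm _ hq).1 (hPm _ hq).2
      (measurable_exp.comp (measurable_of_mem_sparseReluClass (hGsub hh)))
      (fun _ => (exp_pos _).le) (hexpF (hGsub hh)) _
  rintro ⟨⟨t, ht⟩, ⟨g, hg⟩⟩
  obtain ⟨⟨A, C⟩, hq, hAt, htC, hν⟩ := hP t ht
  obtain ⟨h, hhG, hgh⟩ := hG g hg
  have hclose : ∀ x ∈ cube p0, |exp (g x) - exp (h x)| ≤ ε / 4 := fun x hx =>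
    calc |exp (g x) - exp (h x)| ≤ exp F * |g x - h x| := abs_exp_sub_exp_le
          (abs_le.1 (abs_le_of_mem_sparseReluClass hg hx)).2
          (abs_le.1 (abs_le_of_mem_sparseReluClass (hGsub hhG) hx)).2
      _ ≤ exp F * (ε / (4 * exp F)) := by gcongr; exact hgh x hx
      _ = ε / 4 := by field_simp
  have hbr := isBracket_riskBracket (μ := μ) hZ hZX (hPm _ hq).1 (hPm _ hq).2 hAt htC
    (measurable_exp.comp (measurable_of_mem_sparseReluClass (hGsub hhG)))
    (fun _ => (exp_pos _).le) (hexpF (hGsub hhG)) hclose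
  refine ⟨_, mem_image_of_mem _ (mk_mem_prod hq hhG), hbr.1, hbr.2.trans ?_⟩
  have hνε : (μ.map fun ω => (Z ω).1).real (C \ A) ≤ ε / (2 * exp F) :=
    ENNReal.toReal_le_of_le_ofReal (by positivity) hν.le
  calc exp F * (μ.map fun ω => (Z ω).1).real (C \ A) + 2 * (ε / 4)
      ≤ exp F * (ε / (2 * exp F)) + 2 * (ε / 4) := by gcongr
    _ = ε := by field_simp; ring

end CoxDNN

lemma tendsto_iSup_iSup_abs_of_eventually_le {ι κ : Type*} {a : ℕ → ι → κ → ℝ}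
    (h : ∀ ε > 0, ∀ᶠ n in atTop, ∀ i j, |a n i j| ≤ ε) :
    Tendsto (fun n => ⨆ i, ⨆ j, |a n i j|) atTop (𝓝 0) := by
  refine Metric.tendsto_nhds.2 fun ε hε => (h (ε / 2) (half_pos hε)).mono fun n hn => ?_
  have h0 : 0 ≤ ⨆ i, ⨆ j, |a n i j| :=
    Real.iSup_nonneg fun i => Real.iSup_nonneg fun j => abs_nonneg _
  have h1 : ⨆ i, ⨆ j, |a n i j| ≤ ε / 2 :=
    Real.iSup_le (fun i => Real.iSup_le (hn i) (by positivity)) (by positivity)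
  rw [Real.dist_eq, sub_zero, abs_of_nonneg h0]
  linarith

open CoxDNN

theorem stmt12_general
    (τ : ℝ) (p0 L : ℕ) (p : ℕ → ℕ) (s : ℕ) (F : ℝ)
    {Ω : Type} [MeasurableSpace Ω] (μ : Measure Ω) [IsProbabilityMeasure μ]
    (Y : ℕ → Ω → ℝ × (Fin p0 → ℝ))
    (hmeas : ∀ i, Measurable (Y i))
    (hindep : iIndepFun Y μ)
    (hident : ∀ i, μ.map (Y i) = μ.map (Y 0))
    (hXcube : ∀ i ω, (Y i ω).2 ∈ cube p0) :
    ∀ᵐ ω ∂μ,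
      Tendsto
        (fun n : ℕ =>
          ⨆ t : Set.Icc (0 : ℝ) τ, ⨆ g : sparseReluClass p0 L p s F,
            |(n : ℝ)⁻¹ *
                (∑ i ∈ Finset.range n,
                  if (t : ℝ) ≤ (Y i ω).1 then Real.exp (g.1 ((Y i ω).2)) else 0) -
              ∫ ω', (if (t : ℝ) ≤ (Y 0 ω').1 then Real.exp (g.1 ((Y 0 ω').2)) else 0) ∂μ|)
        atTop (nhds 0) := by
  have hf (k : Set.Icc (0 : ℝ) τ × sparseReluClass p0 L p s F) :
      Measurable fun z : ℝ × (Fin p0 → ℝ) => if (k.1 : ℝ) ≤ z.1 then exp (k.2.1 z.2) else 0 :=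
    Measurable.ite (measurableSet_le measurable_const measurable_fst)
      (measurable_exp.comp ((measurable_of_mem_sparseReluClass k.2.2).comp measurable_snd))
      measurable_const
  have hunif := ae_forall_eventually_abs_empiricalMean_sub_le hmeas hindep hident hXcube hf
    fun ε hε => hasFiniteBracketing_riskSet (hmeas 0) (hXcube 0) isCompact_Icc L p s F hε
  filter_upwards [hunif] with ω hω
  exact tendsto_iSup_iSup_abs_of_eventually_le fun ε hε =>
    (hω ε hε).mono fun n hn t g => hn (t, g)

/-- Fix `τ > 0` and a sparse ReLU class `F(L,p,s,F)` on `[0,1]^{p0}`.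
For an i.i.d. sequence `(T_i, X_i)` with `T_i ≥ 0` and `X_i ∈ [0,1]^{p0}`, letting
`S_n⁽⁰⁾(t;g) = n⁻¹ Σ_{i<n} 1{T_i ≥ t} exp(g(X_i))` and
`S⁽⁰⁾(t;g) = E[1{T ≥ t} exp(g(X))]`, we have
`sup_{t ∈ [0,τ]} sup_{g ∈ F(L,p,s,F)} |S_n⁽⁰⁾(t;g) − S⁽⁰⁾(t;g)| → 0` almost surely. -/
theorem stmt12
    (τ : ℝ) (hτ : 0 < τ) (p0 L : ℕ) (p : ℕ → ℕ) (s : ℕ) (F : ℝ) (hF : 0 < F)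
    {Ω : Type} [MeasurableSpace Ω] (μ : Measure Ω) [IsProbabilityMeasure μ]
    (Y : ℕ → Ω → ℝ × (Fin p0 → ℝ))
    (hmeas : ∀ i, Measurable (Y i))
    (hindep : iIndepFun Y μ)
    (hident : ∀ i, μ.map (Y i) = μ.map (Y 0))
    (hTnn : ∀ i ω, 0 ≤ (Y i ω).1)
    (hXcube : ∀ i ω, (Y i ω).2 ∈ cube p0) :
    ∀ᵐ ω ∂μ,
      Tendsto
        (fun n : ℕ =>
          ⨆ t : Set.Icc (0 : ℝ) τ, ⨆ g : sparseReluClass p0 L p s F,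
            |(n : ℝ)⁻¹ *
                (∑ i ∈ Finset.range n,
                  if (t : ℝ) ≤ (Y i ω).1 then Real.exp (g.1 ((Y i ω).2)) else 0) -
              ∫ ω', (if (t : ℝ) ≤ (Y 0 ω').1 then Real.exp (g.1 ((Y 0 ω').2)) else 0) ∂μ|)
        atTop (nhds 0) :=
  stmt12_general τ p0 L p s F μ Y hmeas hindep hident hXcube
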